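/- arXiv:1701.05330 — 3 statements merged into one kernel-verified Lean document; each statement's English description precedes it below -/
import Mathlib

section
/- The regular monomorphisms in the category of Banach spaces and linear contractions are precisely the isometric linear inclusions. -/
open CategoryTheory

/-- The category `Ban¹` of Banach spaces over `𝕜` and linear contractions. -/
structure Ban (𝕜 : Type) [RCLike 𝕜] : Type 1 where
  carrier : Type
  [isNormedAddCommGroup : NormedAddCommGroup carrier]
  [isNormedSpace : NormedSpace 𝕜 carrier]
  [isCompleteSpace : CompleteSpace carrier]

attribute [instance] Ban.isNormedAddCommGroup Ban.isNormedSpace Ban.isCompleteSpace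

instance (𝕜 : Type) [RCLike 𝕜] : CoeSort (Ban 𝕜) Type := ⟨Ban.carrier⟩

noncomputable instance Ban.category (𝕜 : Type) [RCLike 𝕜] : Category (Ban 𝕜) where
  Hom X Y := {f : X →L[𝕜] Y // ‖f‖ ≤ 1}
  id X := ⟨ContinuousLinearMap.id 𝕜 X, ContinuousLinearMap.norm_id_le⟩
  comp f g := ⟨g.1.comp f.1,
    le_trans (ContinuousLinearMap.opNorm_comp_le _ _)
      (mul_le_one₀ g.2 (norm_nonneg _) f.2)⟩
  id_comp f := Subtype.ext (ContinuousLinearMap.comp_id f.1)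
  comp_id f := Subtype.ext (ContinuousLinearMap.id_comp f.1)
  assoc f g h := Subtype.ext (ContinuousLinearMap.comp_assoc h.1 g.1 f.1).symm

/-!
An isomorphism of `Ban¹` is an isometry, since it and its inverse are contractions. Every equalizer
of `g, h : Y ⟶ Z` is therefore, up to such an isomorphism, the inclusion of the closed subspace
`{y | g y = h y}`, which is isometric. Conversely an isometry `f` has closed range and is the
equalizer of the quotient map `Y ⟶ Y ⧸ range f` and zero: a contraction `u` killed by that map
lands in `range f`, and factors through `f` as a contraction because `f` preserves norms.
-/

open Limits

namespace Ban

variable {𝕜 : Type} [RCLike 𝕜] {W X Y Z : Ban 𝕜}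

lemma hom_ext {f g : X ⟶ Y} (h : ∀ x, f.1 x = g.1 x) : f = g :=
  Subtype.ext (ContinuousLinearMap.ext h)

lemma comp_apply (f : X ⟶ Y) (g : Y ⟶ Z) (x : X) : (f ≫ g).1 x = g.1 (f.1 x) := rfl

lemma id_apply (x : X) : (𝟙 X : X ⟶ X).1 x = x := rfl

lemma norm_apply_le (f : X ⟶ Y) (x : X) : ‖f.1 x‖ ≤ ‖x‖ :=
  (f.1.le_opNorm x).trans (mul_le_of_le_one_left (norm_nonneg x) f.2)

lemma apply_eq_of_comp_eq {u : W ⟶ Y} {g h : Y ⟶ Z} (w : u ≫ g = u ≫ h) (x : W) :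
    g.1 (u.1 x) = h.1 (u.1 x) := by
  rw [← comp_apply, w, comp_apply]

lemma isometry_of_comp_eq_id {f : X ⟶ Y} {r : Y ⟶ X} (h : f ≫ r = 𝟙 X) : Isometry f.1 :=
  AddMonoidHomClass.isometry_of_norm f.1 fun x => le_antisymm (norm_apply_le f x) <|
    calc ‖x‖ = ‖r.1 (f.1 x)‖ := by rw [← comp_apply, h, id_apply]
      _ ≤ ‖f.1 x‖ := norm_apply_le r _

lemma isometry_iso_hom (e : X ≅ Y) : Isometry e.hom.1 :=
  isometry_of_comp_eq_id e.hom_inv_id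

lemma mono_of_isometry {f : X ⟶ Y} (hf : Isometry f.1) : Mono f :=
  ⟨fun a b h => hom_ext fun x => hf.injective (by rw [← comp_apply, h, comp_apply])⟩

def toLinearIsometry {f : X ⟶ Y} (hf : Isometry f.1) : X →ₗᵢ[𝕜] Y :=
  ⟨f.1.toLinearMap, hf.norm_map_of_map_zero (map_zero f.1)⟩

noncomputable def liftOfIsometry {f : X ⟶ Y} (hf : Isometry f.1) (u : W ⟶ Y)
    (hu : ∀ x, u.1 x ∈ Set.range f.1) : W ⟶ X :=
  let e := (toLinearIsometry hf).equivRange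
  ⟨(e.symm : _ →L[𝕜] X).comp (u.1.codRestrict (toLinearIsometry hf).range hu),
    ContinuousLinearMap.opNorm_le_bound _ zero_le_one fun x => by
      rw [one_mul]
      exact (e.symm.norm_map _).trans_le (norm_apply_le u x)⟩

lemma liftOfIsometry_comp {f : X ⟶ Y} (hf : Isometry f.1) (u : W ⟶ Y)
    (hu : ∀ x, u.1 x ∈ Set.range f.1) : liftOfIsometry hf u hu ≫ f = u :=
  hom_ext fun x => congrArg Subtype.val
    ((toLinearIsometry hf).equivRange.apply_symm_apply ⟨u.1 x, hu x⟩)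

noncomputable def isLimitForkOfIsometry {f : X ⟶ Y} {g h : Y ⟶ Z} (w : f ≫ g = f ≫ h)
    (hf : Isometry f.1) (hrange : ∀ y, g.1 y = h.1 y → y ∈ Set.range f.1) :
    IsLimit (Fork.ofι f w) :=
  haveI := mono_of_isometry hf
  Fork.IsLimit.mk' _ fun s =>
    let hs x := hrange _ (apply_eq_of_comp_eq s.condition x)
    ⟨liftOfIsometry hf s.ι hs, liftOfIsometry_comp hf s.ι hs, fun hm =>
      (cancel_mono f).1 (hm.trans (liftOfIsometry_comp hf s.ι hs).symm)⟩

noncomputable abbrev eqLocus (g h : Y ⟶ Z) : Ban 𝕜 :=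
  ⟨g.1.toLinearMap.eqLocus h.1.toLinearMap⟩

noncomputable def eqLocusι (g h : Y ⟶ Z) : eqLocus g h ⟶ Y :=
  ⟨(g.1.toLinearMap.eqLocus h.1.toLinearMap).subtypeL, Submodule.norm_subtypeL_le _⟩

lemma isometry_eqLocusι (g h : Y ⟶ Z) : Isometry (eqLocusι g h).1 :=
  isometry_subtype_coe

lemma eqLocusι_comp (g h : Y ⟶ Z) : eqLocusι g h ≫ g = eqLocusι g h ≫ h :=
  hom_ext fun y => Subtype.property y

noncomputable def isLimitEqLocusFork (g h : Y ⟶ Z) :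
    IsLimit (Fork.ofι (eqLocusι g h) (eqLocusι_comp g h)) :=
  isLimitForkOfIsometry _ (isometry_eqLocusι g h) fun y hy => ⟨⟨y, hy⟩, rfl⟩

lemma isometry_of_regularMono (f : X ⟶ Y) (hf : RegularMono f) : Isometry f.1 := by
  have hcomp := IsLimit.conePointUniqueUpToIso_hom_comp hf.isLimit
    (isLimitEqLocusFork hf.left hf.right) WalkingParallelPair.zero
  change _ ≫ eqLocusι _ _ = f at hcomp
  rw [← hcomp]
  exact (isometry_eqLocusι _ _).comp (isometry_iso_hom _)

noncomputable abbrev quotient (S : Submodule 𝕜 Y) [IsClosed (S : Set Y)] : Ban 𝕜 := ⟨Y ⧸ S⟩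

noncomputable def mkQ (S : Submodule 𝕜 Y) [IsClosed (S : Set Y)] : Y ⟶ quotient S :=
  ⟨S.mkQL, ContinuousLinearMap.opNorm_le_bound _ zero_le_one fun y => by
    simpa using Submodule.Quotient.norm_mk_le S y⟩

def zeroHom (X Y : Ban 𝕜) : X ⟶ Y := ⟨0, by simp⟩

noncomputable def regularMonoOfIsometry {f : X ⟶ Y} (hf : Isometry f.1) : RegularMono f :=
  let S := LinearMap.range (f.1 : X →ₗ[𝕜] Y)
  haveI : IsClosed (S : Set Y) := hf.isClosedEmbedding.isClosed_range
  have w : f ≫ mkQ S = f ≫ zeroHom Y (quotient S) :=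
    hom_ext fun x => (Submodule.Quotient.mk_eq_zero S).2 ⟨x, rfl⟩
  ⟨quotient S, mkQ S, zeroHom Y (quotient S), w,
    isLimitForkOfIsometry w hf fun _ hy => (Submodule.Quotient.mk_eq_zero S).1 hy⟩

end Ban

/-- The regular monomorphisms in `Ban¹` are precisely the isometric
linear inclusions. -/
theorem regularMono_iff_isometry (𝕜 : Type) [RCLike 𝕜] {X Y : Ban 𝕜} (f : X ⟶ Y) :
    Nonempty (CategoryTheory.RegularMono f) ↔ Isometry f.1 :=
  ⟨fun ⟨hf⟩ => Ban.isometry_of_regularMono f hf, fun hf => ⟨Ban.regularMonoOfIsometry hf⟩⟩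
end

section
/- If ι : V → W is a linear contraction between Banach spaces such that the dual map ι* : W* → V* is a split epimorphism (admits a contractive linear section), then ι is an isometric inclusion. -/
/-! A norming functional `f` of `v` extends along `ι` to a functional of norm at most one,
which then witnesses `‖v‖ = ‖f v‖ ≤ ‖ι v‖`; the reverse inequality is the contractivity of `ι`. -/

namespace ContinuousLinearMap

variable {𝕜 V W : Type*} [RCLike 𝕜] [SeminormedAddCommGroup V] [NormedSpace 𝕜 V]
  [SeminormedAddCommGroup W] [NormedSpace 𝕜 W]

theorem norm_le_norm_apply_of_forall_exists_extension (ι : V →L[𝕜] W)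
    (hext : ∀ f : StrongDual 𝕜 V, ∃ g : StrongDual 𝕜 W, ‖g‖ ≤ ‖f‖ ∧ g.comp ι = f) (v : V) :
    ‖v‖ ≤ ‖ι v‖ := by
  refine NormedSpace.norm_le_dual_bound 𝕜 v (norm_nonneg _) fun f ↦ ?_
  obtain ⟨g, hg, rfl⟩ := hext f
  calc ‖g (ι v)‖ ≤ ‖g‖ * ‖ι v‖ := g.le_opNorm _
    _ ≤ ‖g.comp ι‖ * ‖ι v‖ := by gcongr
    _ = ‖ι v‖ * ‖g.comp ι‖ := mul_comm _ _

theorem isometry_of_forall_exists_extension (ι : V →L[𝕜] W) (hι : ‖ι‖ ≤ 1)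
    (hext : ∀ f : StrongDual 𝕜 V, ∃ g : StrongDual 𝕜 W, ‖g‖ ≤ ‖f‖ ∧ g.comp ι = f) :
    Isometry ι :=
  AddMonoidHomClass.isometry_of_norm ι fun v ↦
    le_antisymm (by simpa using ι.le_of_opNorm_le hι v)
      (ι.norm_le_norm_apply_of_forall_exists_extension hext v)

end ContinuousLinearMap

theorem isometry_of_dual_split_epi_general (𝕜 : Type) [RCLike 𝕜]
    (V W : Type) [NormedAddCommGroup V] [NormedSpace 𝕜 V]
    [NormedAddCommGroup W] [NormedSpace 𝕜 W]
    (ι : V →L[𝕜] W) (hι : ‖ι‖ ≤ 1)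
    (s : (V →L[𝕜] 𝕜) →L[𝕜] (W →L[𝕜] 𝕜)) (hs : ‖s‖ ≤ 1)
    (hsec : ∀ f : V →L[𝕜] 𝕜, (s f).comp ι = f) :
    Isometry ι :=
  ι.isometry_of_forall_exists_extension hι fun f ↦
    ⟨s f, by simpa using s.le_of_opNorm_le hs f, hsec f⟩

/-- If the dual map of a linear contraction `ι : V → W` admits a
contractive linear section, then `ι` is an isometric inclusion. -/
theorem isometry_of_dual_split_epi (𝕜 : Type) [RCLike 𝕜]
    (V W : Type) [NormedAddCommGroup V] [NormedSpace 𝕜 V] [CompleteSpace V]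
    [NormedAddCommGroup W] [NormedSpace 𝕜 W] [CompleteSpace W]
    (ι : V →L[𝕜] W) (hι : ‖ι‖ ≤ 1)
    (s : (V →L[𝕜] 𝕜) →L[𝕜] (W →L[𝕜] 𝕜)) (hs : ‖s‖ ≤ 1)
    (hsec : ∀ f : V →L[𝕜] 𝕜, (s f).comp ι = f) :
    Isometry ι :=
  isometry_of_dual_split_epi_general 𝕜 V W ι hι s hs hsec
end

section
/- The functor [−, 𝕂] : Ban¹ → (Ban¹)ᵒᵖ sending a Banach space to its dual is comonadic; equivalently, [−, 𝕂] : (Ban¹)ᵒᵖ → Ban¹ is monadic. In particular, [−, 𝕂] : Ban¹ → (Ban¹)ᵒᵖ is conservative: a linear contraction f : V → W between Banach spaces is an isometric isomorphism if and only if f* : W* → V* is an isometric isomorphism. -/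
/-!
If the transpose `E` of `f` is an isometric isomorphism, then testing against norming functionals
(Hahn–Banach) shows that `f` is isometric, in both directions because `‖E g‖ = ‖g‖`. An isometry
out of a Banach space has closed range; a functional vanishing on that range is sent to `0` by
the injective map `E`, so it is `0`, and Hahn–Banach on the quotient by the range then shows
that `f` is onto.
-/

open NormedSpace

variable {𝕜 V W : Type*} [RCLike 𝕜] [NormedAddCommGroup V] [NormedSpace 𝕜 V]
  [NormedAddCommGroup W] [NormedSpace 𝕜 W]

def LinearIsometryEquiv.dualMap (e : V ≃ₗᵢ[𝕜] W) : StrongDual 𝕜 W ≃ₗᵢ[𝕜] StrongDual 𝕜 V where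
  toLinearEquiv :=
    (ContinuousLinearEquiv.arrowCongr e.toContinuousLinearEquiv.symm
      (ContinuousLinearEquiv.refl 𝕜 𝕜)).toLinearEquiv
  norm_map' g := g.opNorm_comp_linearIsometryEquiv e

@[simp]
theorem LinearIsometryEquiv.dualMap_apply (e : V ≃ₗᵢ[𝕜] W) (g : StrongDual 𝕜 W) (v : V) :
    e.dualMap g v = g (e v) :=
  rfl

theorem Submodule.eq_top_of_isClosed_of_forall_dual {p : Submodule 𝕜 W}
    (hp : IsClosed (p : Set W)) (h : ∀ g : StrongDual 𝕜 W, (∀ x ∈ p, g x = 0) → g = 0) :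
    p = ⊤ := by
  have : IsClosed (p : Set W) := hp
  refine eq_top_iff'.2 fun x => (Submodule.Quotient.mk_eq_zero p).1 ?_
  refine SeparatingDual.eq_zero_of_forall_dual_eq_zero (R := 𝕜) fun φ => ?_
  have hφ : φ.comp p.mkQL = 0 :=
    h _ fun y hy => by simp [(Submodule.Quotient.mk_eq_zero p).2 hy]
  simpa using congr($hφ x)

namespace ContinuousLinearMap

variable {f : V →L[𝕜] W} {E : StrongDual 𝕜 W ≃ₗᵢ[𝕜] StrongDual 𝕜 V}

theorem norm_apply_of_isometric_transpose (hE : ∀ g v, E g v = g (f v)) (v : V) :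
    ‖f v‖ = ‖v‖ := by
  refine le_antisymm (norm_le_dual_bound 𝕜 _ (norm_nonneg v) fun g => ?_)
    (norm_le_dual_bound 𝕜 _ (norm_nonneg (f v)) fun h => ?_)
  · calc ‖g (f v)‖ = ‖E g v‖ := by rw [hE]
      _ ≤ ‖E g‖ * ‖v‖ := (E g).le_opNorm v
      _ = ‖v‖ * ‖g‖ := by rw [E.norm_map, mul_comm]
  · calc ‖h v‖ = ‖E.symm h (f v)‖ := by rw [← hE, E.apply_symm_apply]
      _ ≤ ‖E.symm h‖ * ‖f v‖ := (E.symm h).le_opNorm (f v)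
      _ = ‖f v‖ * ‖h‖ := by rw [E.symm.norm_map, mul_comm]

theorem surjective_of_isometric_transpose [CompleteSpace V] (hE : ∀ g v, E g v = g (f v)) :
    Function.Surjective f := by
  let F : V →ₗᵢ[𝕜] W := ⟨f, norm_apply_of_isometric_transpose hE⟩
  have hclosed : IsClosed (LinearMap.range F.toLinearMap : Set W) :=
    F.isometry.isClosedEmbedding.isClosed_range
  refine LinearMap.range_eq_top.1 <|
    Submodule.eq_top_of_isClosed_of_forall_dual hclosed fun g hg => E.injective ?_
  ext v
  rw [hE, map_zero, zero_apply]
  exact hg _ ⟨v, rfl⟩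

end ContinuousLinearMap

theorem dualization_conservative_general (𝕜 : Type) [RCLike 𝕜]
    (V W : Type) [NormedAddCommGroup V] [NormedSpace 𝕜 V] [CompleteSpace V]
    [NormedAddCommGroup W] [NormedSpace 𝕜 W]
    (f : V →L[𝕜] W) :
    (∃ e : V ≃ₗᵢ[𝕜] W, ∀ v : V, e v = f v) ↔
    (∃ E : StrongDual 𝕜 W ≃ₗᵢ[𝕜] StrongDual 𝕜 V, ∀ (g : StrongDual 𝕜 W) (v : V), E g v = g (f v)) := by
  constructor
  · rintro ⟨e, he⟩
    exact ⟨e.dualMap, fun g v => by rw [e.dualMap_apply, he]⟩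
  · rintro ⟨E, hE⟩
    exact ⟨.ofSurjective ⟨f, f.norm_apply_of_isometric_transpose hE⟩
      (f.surjective_of_isometric_transpose hE), fun v => rfl⟩

/-- The dualization functor `[−, 𝕜] : Ban¹ → (Ban¹)ᵒᵖ` is comonadic and in
particular conservative: a linear contraction `f : V → W` between Banach spaces is an
isometric isomorphism if and only if its dual `f* : W* → V*` is an isometric
isomorphism. (This conservativity is the key concrete consequence.) -/
theorem dualization_conservative (𝕜 : Type) [RCLike 𝕜]
    (V W : Type) [NormedAddCommGroup V] [NormedSpace 𝕜 V] [CompleteSpace V]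
    [NormedAddCommGroup W] [NormedSpace 𝕜 W] [CompleteSpace W]
    (f : V →L[𝕜] W) (hf : ‖f‖ ≤ 1) :
    (∃ e : V ≃ₗᵢ[𝕜] W, ∀ v : V, e v = f v) ↔
    (∃ E : StrongDual 𝕜 W ≃ₗᵢ[𝕜] StrongDual 𝕜 V, ∀ (g : StrongDual 𝕜 W) (v : V), E g v = g (f v)) :=
  dualization_conservative_general 𝕜 V W f
end
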